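/- arXiv:1903.00692 — 2 statements merged into one kernel-verified Lean document; each statement's English description precedes it below -/
import Mathlib

section
/- Let λ be a partition of m different from (m) and (1,1,...,1), and let χ^λ be the corresponding irreducible character of the symmetric group S_m. Then χ^λ(1) - χ^λ((123)) ≥ χ^λ(1)/(m-1), where (123) denotes a 3-cycle. -/
/-!
Induct on `n`, proving for every representation `V` of `S_n` and every 3-cycle `g` the bound
`dim V / (n - 1) ≤ dim V - χ(g) + dim V^{S_n} + dim V^{sgn}`; the last two terms vanish for
irreducible `V` other than the trivial and the sign representation. Both sides are additive in
`V`, so by Maschke only irreducible `V` matter. Restrict such a `V` to the stabiliser `S_{n-1}`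
of a point outside the support of `g`. If the restriction has no trivial or sign constituent,
the bound for `S_{n-1}` is stronger than needed. Otherwise a vector fixed by `S_{n-1}` (up to
sign) exhibits `V` as a quotient of the permutation module, i.e. as the standard representation
or its sign twist, where `dim V = n - 1` and `χ(g) = n - 4`. For `n = 3` we have `⟨g⟩ = A_3`, so
the `g`-fixed vectors lie in `V^{S_3} ⊕ V^{sgn}`, and `dim V + 2 χ(g) = 3 dim V^g` gives the bound.
-/

open LinearMap Module Equiv Equiv.Perm Representation

universe u

theorem LinearMap.trace_eq_add_of_isCompl {R M : Type*} [Field R] [AddCommGroup M] [Module R M]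
    [FiniteDimensional R M] {U U' : Submodule R M} (h : IsCompl U U') (f : M →ₗ[R] M)
    (hU : ∀ x ∈ U, f x ∈ U) (hU' : ∀ x ∈ U', f x ∈ U') :
    trace R M f = trace R U (f.restrict hU) + trace R U' (f.restrict hU') := by
  have hN : DirectSum.IsInternal fun b : Bool => cond b U U' :=
    (DirectSum.isInternal_submodule_iff_isCompl _ (i := true) (j := false) Bool.noConfusion
      (by ext b; cases b <;> simp)).mpr h
  rw [trace_eq_sum_trace_restrict hN (f := f) (by rintro (_ | _) <;> assumption), Fintype.sum_bool]
  rfl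

/-- `(1 + a + a²) / 3` is a projection onto the vectors fixed by `a`. -/
theorem Module.End.trace_one_add_trace_add_trace_sq {k V : Type*} [Field k] [NeZero (3 : k)]
    [AddCommGroup V] [Module k V] [FiniteDimensional k V] (a : Module.End k V) (ha : a ^ 3 = 1) :
    trace k V 1 + trace k V a + trace k V (a ^ 2) = 3 * finrank k (ker (a - 1)) := by
  set P : Module.End k V := (3 : k)⁻¹ • (1 + a + a ^ 2)
  have haP : (a - 1) * P = 0 := by
    rw [mul_smul_comm, show (a - 1) * (1 + a + a ^ 2) = a ^ 3 - 1 by noncomm_ring, ha, sub_self,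
      smul_zero]
  have hP : IsProj (ker (a - 1)) P := by
    refine ⟨fun x => mem_ker.mpr congr($haP x), fun x hx => ?_⟩
    have hax : a x = x := sub_eq_zero.mp (mem_ker.mp hx)
    have hsum : (1 + a + a ^ 2 : Module.End k V) x = (3 : k) • x := by
      simp only [LinearMap.add_apply, Module.End.one_apply, pow_two, Module.End.mul_apply, hax]
      module
    rw [LinearMap.smul_apply, hsum, inv_smul_smul₀ three_ne_zero]
  have := hP.trace
  simp only [P, map_smul, map_add, smul_eq_mul] at this
  rw [← this, mul_inv_cancel_left₀ three_ne_zero]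

namespace Equiv.Perm

variable {α : Type*} [DecidableEq α]

lemma exists_apply_eq_and_apply_eq {i j a b : α} (hij : i ≠ j) (hab : a ≠ b) :
    ∃ σ : Perm α, σ i = a ∧ σ j = b := by
  refine ⟨swap (swap i a j) b * swap i a, ?_, by simp⟩
  have : a ≠ swap i a j := by
    rw [ne_comm, Ne, swap_apply_eq_iff, swap_apply_right]
    exact hij.symm
  simp [swap_apply_of_ne_of_ne this hab]

variable [Fintype α]

lemma card_filter_apply_eq_add_card_support (σ : Perm α) :
    (Finset.univ.filter fun i => σ i = i).card + σ.support.card = Fintype.card α := by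
  simpa [Equiv.Perm.support] using
    Finset.card_filter_add_card_filter_not (s := Finset.univ) (fun i => σ i = i)

lemma IsThreeCycle.three_le_card {g : Perm α} (hg : g.IsThreeCycle) : 3 ≤ Fintype.card α :=
  hg.card_support ▸ Finset.card_le_univ g.support

theorem IsThreeCycle.zpowers_eq_alternatingGroup {g : Perm α} (hg : g.IsThreeCycle)
    (hα : Fintype.card α = 3) : Subgroup.zpowers g = alternatingGroup α := by
  have : Nontrivial α := Fintype.one_lt_card_iff_nontrivial.mp (by omega)
  refine Subgroup.eq_of_le_of_card_ge (Subgroup.zpowers_le.mpr hg.mem_alternatingGroup) ?_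
  rw [nat_card_alternatingGroup, Nat.card_zpowers, hg.orderOf, Nat.card_eq_fintype_card, hα]
  rfl

variable (k : Type*) [Ring k]

def signChar : Perm α →* kˣ := (Units.map (Int.castRingHom k : ℤ →* k)).comp sign

@[simp] lemma coe_signChar (σ : Perm α) : (signChar k σ : k) = ((sign σ : ℤ) : k) := rfl

lemma signChar_comp_ofSubtype {p : α → Prop} [DecidablePred p] :
    (signChar k).comp (ofSubtype : Perm (Subtype p) →* Perm α) = signChar k :=
  MonoidHom.ext fun σ => by simp [signChar, sign_ofSubtype]

end Equiv.Perm

lemma Subrepresentation.isCompl_toSubmodule_iff {k G V : Type*} [Semiring k] [Monoid G]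
    [AddCommMonoid V] [Module k V] {ρ : Representation k G V} {U U' : Subrepresentation ρ} :
    IsCompl U.toSubmodule U'.toSubmodule ↔ IsCompl U U' := by
  simp only [isCompl_iff, disjoint_iff, codisjoint_iff,
    ← Subrepresentation.toSubmodule_injective.eq_iff]
  rfl

namespace Representation

section Monoid

variable {k G V : Type*} [Field k] [Monoid G] [AddCommGroup V] [Module k V]

def twist (ρ : Representation k G V) (χ : G →* kˣ) : Representation k G V where
  toFun g := (χ g : k) • ρ g
  map_one' := by simp
  map_mul' g h := by ext v; simp [smul_smul, mul_comm]

@[simp] lemma twist_apply (ρ : Representation k G V) (χ : G →* kˣ) (g : G) (v : V) :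
    ρ.twist χ g v = (χ g : k) • ρ g v := rfl

lemma twist_one (ρ : Representation k G V) : ρ.twist 1 = ρ := by
  ext; simp

lemma twist_comp {H : Type*} [Monoid H] (ρ : Representation k G V) (χ : G →* kˣ) (f : H →* G) :
    (ρ.twist χ).comp f = twist (ρ.comp f) (χ.comp f) := rfl

lemma character_twist (ρ : Representation k G V) (χ : G →* kˣ) (g : G) :
    (ρ.twist χ).character g = χ g * ρ.character g :=
  map_smul (trace k V) (χ g : k) (ρ g)

def twistOrderIso (ρ : Representation k G V) (χ : G →* kˣ) :
    Subrepresentation ρ ≃o Subrepresentation (ρ.twist χ) where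
  toFun U := ⟨U.toSubmodule, fun g _ hv => U.toSubmodule.smul_mem _ (U.apply_mem_toSubmodule g hv)⟩
  invFun U := ⟨U.toSubmodule, fun g v hv => by
    simpa [smul_smul] using U.toSubmodule.smul_mem (χ g)⁻¹.1 (U.apply_mem_toSubmodule g hv)⟩
  left_inv _ := rfl
  right_inv _ := rfl
  map_rel_iff' := Iff.rfl

instance (ρ : Representation k G V) (χ : G →* kˣ) [ρ.IsIrreducible] :
    (ρ.twist χ).IsIrreducible :=
  (ρ.twistOrderIso χ).symm.isSimpleOrder

lemma isIrreducible_of_forall_map_le (ρ : Representation k G V) (hV : (⊥ : Submodule k V) ≠ ⊤)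
    (h : ∀ U : Submodule k V, (∀ g, U.map (ρ g) ≤ U) → U = ⊥ ∨ U = ⊤) : ρ.IsIrreducible :=
  have : Nontrivial (Subrepresentation ρ) :=
    ⟨⊥, ⊤, fun h => hV (congrArg Subrepresentation.toSubmodule h)⟩
  { eq_bot_or_eq_top := fun U =>
      (h U.toSubmodule fun g => Submodule.map_le_iff_le_comap.mpr (U.apply_mem_toSubmodule g)).imp
        (fun h => Subrepresentation.toSubmodule_injective h)
        (fun h => Subrepresentation.toSubmodule_injective h) }

lemma IsIrreducible.nontrivial (ρ : Representation k G V) [ρ.IsIrreducible] : Nontrivial V := by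
  by_contra hV
  rw [not_nontrivial_iff_subsingleton] at hV
  exact bot_ne_top (α := Subrepresentation ρ)
    (Subrepresentation.toSubmodule_injective (Subsingleton.elim _ _))

lemma character_eq_add_of_isCompl [FiniteDimensional k V] {ρ : Representation k G V}
    {U U' : Subrepresentation ρ} (h : IsCompl U U') (g : G) :
    ρ.character g = U.toRepresentation.character g + U'.toRepresentation.character g :=
  trace_eq_add_of_isCompl (Subrepresentation.isCompl_toSubmodule_iff.mpr h) (ρ g)
    (U.apply_mem_toSubmodule g) (U'.apply_mem_toSubmodule g)

end Monoid

section Group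

variable {k G V : Type*} [Field k] [Group G] [AddCommGroup V] [Module k V]

lemma character_eq_of_isConj (ρ : Representation k G V) {g h : G} (hgh : IsConj g h) :
    ρ.character g = ρ.character h := by
  obtain ⟨c, rfl⟩ := isConj_iff.mp hgh
  exact (char_conj ρ g c).symm

section Irreducible

variable (ρ : Representation k G V) [ρ.IsIrreducible]

lemma IsIrreducible.invariants_eq_bot_or_eq_top : ρ.invariants = ⊥ ∨ ρ.invariants = ⊤ :=
  (eq_bot_or_eq_top (⟨ρ.invariants, fun g _ hv => (hv g).symm ▸ hv⟩ : Subrepresentation ρ)).imp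
    (congrArg Subrepresentation.toSubmodule) (congrArg Subrepresentation.toSubmodule)

lemma IsIrreducible.finrank_eq_one_of_invariants_eq_top (h : ρ.invariants = ⊤) :
    finrank k V = 1 := by
  have := IsIrreducible.nontrivial ρ
  obtain ⟨w, hw⟩ := exists_ne (0 : V)
  let L : Subrepresentation ρ :=
    ⟨k ∙ w, fun g v hv => by rwa [(h ▸ Submodule.mem_top : v ∈ ρ.invariants) g]⟩
  have hL : L.toSubmodule = ⊤ := by
    refine congrArg Subrepresentation.toSubmodule ((eq_bot_or_eq_top L).resolve_left fun hL => ?_)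
    have hwL : w ∈ L.toSubmodule := Submodule.mem_span_singleton_self w
    rw [hL] at hwL
    exact hw hwL
  rw [← finrank_top k V, ← hL, finrank_span_singleton hw]

lemma IsIrreducible.character_eq_one_of_invariants_eq_top [FiniteDimensional k V]
    (h : ρ.invariants = ⊤) (g : G) :
    ρ.character g = 1 := by
  have hg : ρ g = 1 := LinearMap.ext fun v => (h ▸ Submodule.mem_top : v ∈ ρ.invariants) g
  rw [character, hg, trace_one, finrank_eq_one_of_invariants_eq_top ρ h, Nat.cast_one]

end Irreducible

section Complement

variable [CharZero k] [Fintype G] [FiniteDimensional k V] {ρ : Representation k G V}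
  {U U' : Subrepresentation ρ}

lemma finrank_invariants_twist_eq_add_of_isCompl (h : IsCompl U U') (χ : G →* kˣ) :
    finrank k (ρ.twist χ).invariants =
      finrank k (U.toRepresentation.twist χ).invariants +
        finrank k (U'.toRepresentation.twist χ).invariants := by
  apply Nat.cast_injective (R := k)
  simp only [Nat.cast_add, ← card_inv_mul_sum_char_eq_finrank, character_twist,
    character_eq_add_of_isCompl h, mul_add, Finset.sum_add_distrib]

lemma finrank_invariants_eq_add_of_isCompl (h : IsCompl U U') :
    finrank k ρ.invariants =
      finrank k U.toRepresentation.invariants + finrank k U'.toRepresentation.invariants := by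
  have := finrank_invariants_twist_eq_add_of_isCompl h 1
  rwa [twist_one, twist_one, twist_one] at this

end Complement

variable (k G) in
theorem induction_on_isCompl [Finite G] [NeZero (Nat.card G : k)]
    {P : ∀ {V : Type u} [AddCommGroup V] [Module k V] [FiniteDimensional k V],
      Representation k G V → Prop}
    (subsingleton : ∀ {V : Type u} [AddCommGroup V] [Module k V] [FiniteDimensional k V]
      (ρ : Representation k G V), Subsingleton V → P ρ)
    (irreducible : ∀ {V : Type u} [AddCommGroup V] [Module k V] [FiniteDimensional k V]
      (ρ : Representation k G V), ρ.IsIrreducible → P ρ)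
    (isCompl : ∀ {V : Type u} [AddCommGroup V] [Module k V] [FiniteDimensional k V]
      (ρ : Representation k G V) (U U' : Subrepresentation ρ), IsCompl U U' →
      P U.toRepresentation → P U'.toRepresentation → P ρ)
    {V : Type u} [AddCommGroup V] [Module k V] [FiniteDimensional k V]
    (ρ : Representation k G V) : P ρ := by
  induction h : finrank k V using Nat.strong_induction_on generalizing V with
  | _ n ih =>
  rcases subsingleton_or_nontrivial V with hV | hV
  · exact subsingleton ρ hV
  by_cases hsplit : ∃ U : Subrepresentation ρ, U ≠ ⊥ ∧ U ≠ ⊤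
  · obtain ⟨U, hU, hU'⟩ := hsplit
    obtain ⟨U', hc⟩ := exists_isCompl U
    have hlt (W : Subrepresentation ρ) (hW : W ≠ ⊤) : finrank k W.toSubmodule < n :=
      h ▸ Submodule.finrank_lt (fun h => hW (Subrepresentation.toSubmodule_injective h))
    exact isCompl ρ U U' hc (ih _ (hlt U hU') _ rfl)
      (ih _ (hlt U' fun h => hU (eq_bot_of_isCompl_top (h ▸ hc))) _ rfl)
  · push Not at hsplit
    have : Nontrivial (Subrepresentation ρ) :=
      ⟨⊥, ⊤, fun h => bot_ne_top (congrArg Subrepresentation.toSubmodule h)⟩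
    exact irreducible ρ { eq_bot_or_eq_top := fun U => or_iff_not_imp_left.mpr (hsplit U) }

end Group

section Perm

variable {α k V : Type*} [Fintype α] [DecidableEq α] [Field k] [AddCommGroup V] [Module k V]
  (ρ : Representation k (Perm α) V)

lemma mem_invariants_sup_of_forall_mem_alternatingGroup [NeZero (2 : k)] [Nontrivial α] {v : V}
    (hv : ∀ σ ∈ alternatingGroup α, ρ σ v = v) :
    v ∈ ρ.invariants ⊔ (ρ.twist (signChar k)).invariants := by
  obtain ⟨x, y, hxy⟩ := exists_pair_ne α
  have hs : sign (swap x y) = -1 := sign_swap hxy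
  have hsame (τ τ' : Perm α) (h : sign τ = sign τ') : ρ τ v = ρ τ' v := by
    have : τ'⁻¹ * τ ∈ alternatingGroup α := by simp [mem_alternatingGroup, h]
    rw [← mul_inv_cancel_left τ' τ, map_mul, Module.End.mul_apply, hv _ this]
  have hplus : v + ρ (swap x y) v ∈ ρ.invariants := fun σ => by
    rw [map_add, ← Module.End.mul_apply, ← map_mul]
    rcases Int.units_eq_one_or (sign σ) with h | h
    · rw [hsame σ 1 (by simp [h]), hsame (σ * swap x y) (swap x y) (by simp [h]), map_one,
        Module.End.one_apply]
    · rw [hsame σ (swap x y) (by simp [h, hs]), hsame (σ * swap x y) 1 (by simp [h, hs]), map_one,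
        Module.End.one_apply, add_comm]
  have hminus : v - ρ (swap x y) v ∈ (ρ.twist (signChar k)).invariants := fun σ => by
    rw [twist_apply, map_sub, ← Module.End.mul_apply, ← map_mul, coe_signChar]
    rcases Int.units_eq_one_or (sign σ) with h | h
    · rw [hsame σ 1 (by simp [h]), hsame (σ * swap x y) (swap x y) (by simp [h]), map_one,
        Module.End.one_apply, h]
      simp
    · rw [hsame σ (swap x y) (by simp [h, hs]), hsame (σ * swap x y) 1 (by simp [h, hs]), map_one,
        Module.End.one_apply, h]
      simp
  have hv : v = (2 : k)⁻¹ • (v + ρ (swap x y) v) + (2 : k)⁻¹ • (v - ρ (swap x y) v) := by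
    rw [← smul_add, add_add_sub_cancel, ← two_smul k v, inv_smul_smul₀ two_ne_zero]
  rw [hv]
  exact add_mem (Submodule.mem_sup_left (Submodule.smul_mem _ _ hplus))
    (Submodule.mem_sup_right (Submodule.smul_mem _ _ hminus))

lemma ker_sub_one_le_invariants_sup_of_card_eq_three [NeZero (2 : k)] (hα : Fintype.card α = 3)
    {g : Perm α} (hg : g.IsThreeCycle) :
    ker (ρ g - 1) ≤ ρ.invariants ⊔ (ρ.twist (signChar k)).invariants := by
  intro v hv
  have : Nontrivial α := Fintype.one_lt_card_iff_nontrivial.mp (by omega)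
  refine ρ.mem_invariants_sup_of_forall_mem_alternatingGroup fun σ hσ => ?_
  rw [← hg.zpowers_eq_alternatingGroup hα, ← mem_powers_iff_mem_zpowers] at hσ
  obtain ⟨n, rfl⟩ := hσ
  rw [map_pow, Module.End.pow_apply]
  exact Function.iterate_fixed (sub_eq_zero.mp (mem_ker.mp hv)) n

lemma character_one_add_two_mul_character_threeCycle [NeZero (3 : k)] [FiniteDimensional k V]
    {g : Perm α} (hg : g.IsThreeCycle) :
    ρ.character 1 + 2 * ρ.character g = 3 * finrank k (ker (ρ g - 1)) := by
  have hsq : ρ.character (g ^ 2) = ρ.character g := ρ.character_eq_of_isConj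
    (isConj_iff_cycleType_eq.mpr (pow_two g ▸ hg.isThreeCycle_sq.trans hg.symm))
  have h := Module.End.trace_one_add_trace_add_trace_sq (ρ g)
    (by rw [← map_pow, ← hg.orderOf, pow_orderOf_eq_one, map_one])
  rw [← h, ← map_pow]
  simp only [character, map_one] at hsq ⊢
  rw [hsq]
  ring

lemma IsIrreducible.character_eq_sign_of_twist_invariants_eq_top [FiniteDimensional k V]
    [ρ.IsIrreducible] (h : (ρ.twist (signChar k)).invariants = ⊤) (σ : Perm α) :
    ρ.character σ = ((sign σ : ℤ) : k) := by
  have hσ := IsIrreducible.character_eq_one_of_invariants_eq_top _ h σ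
  rw [character_twist, coe_signChar] at hσ
  have hsq : ((sign σ : ℤ) : k) * (sign σ : ℤ) = 1 := by
    rw [← Int.cast_mul, ← Units.val_mul, Int.units_mul_self, Units.val_one, Int.cast_one]
  linear_combination ((sign σ : ℤ) : k) * hσ - ρ.character σ * hsq

abbrev restrictStabilizer (p : α) : Representation k (Perm {x // x ≠ p}) V :=
  ρ.comp ofSubtype

lemma apply_eq_of_mem_restrictStabilizer_invariants {p : α} {w : V}
    (hw : w ∈ (ρ.restrictStabilizer p).invariants) (τ : Perm α) (hτ : τ p = p) : ρ τ w = w := by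
  obtain ⟨τ', rfl⟩ := (mem_range_ofSubtype_iff (p := (· ≠ p)) (g := τ)).mpr fun x hx hxp =>
    mem_support.mp hx (hxp ▸ hτ)
  exact hw τ'

lemma twist_restrictStabilizer (p : α) :
    (ρ.restrictStabilizer p).twist (signChar k) = (ρ.twist (signChar k)).restrictStabilizer p := by
  rw [restrictStabilizer, restrictStabilizer, twist_comp, signChar_comp_ofSubtype]

end Perm

section PermRep

variable (k α : Type*) [Field k]

def permRep : Representation k (Perm α) (α → k) where
  toFun σ := funLeft k k ⇑σ⁻¹
  map_one' := rfl
  map_mul' _ _ := rfl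

def constants : Subrepresentation (permRep k α) :=
  ⟨k ∙ 1, fun σ x hx => by
    obtain ⟨c, rfl⟩ := Submodule.mem_span_singleton.mp hx
    exact Submodule.mem_span_singleton.mpr ⟨c, by ext; simp [permRep]⟩⟩

def sumZero [Fintype α] : Subrepresentation (permRep k α) :=
  ⟨ker (∑ i, LinearMap.proj i), fun σ x hx => by
    simpa [permRep, Equiv.sum_comp σ.symm x] using hx⟩

variable {k α}

@[simp] lemma permRep_apply (σ : Perm α) (x : α → k) (i : α) :
    permRep k α σ x i = x (σ⁻¹ i) := rfl

lemma permRep_apply_of_mem_constants {x : α → k} (hx : x ∈ constants k α) (σ : Perm α) :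
    permRep k α σ x = x := by
  obtain ⟨c, rfl⟩ := Submodule.mem_span_singleton.mp hx
  ext; simp

lemma permRep_single [DecidableEq α] (σ : Perm α) (i : α) :
    permRep k α σ (Pi.single i 1) = Pi.single (σ i) 1 := by
  ext j
  simp [Pi.single_apply, eq_symm_apply, eq_comm]

variable [Fintype α]

lemma mem_sumZero {x : α → k} : x ∈ sumZero k α ↔ ∑ i, x i = 0 := by
  show x ∈ ker _ ↔ _
  simp

lemma character_constants [Nonempty α] (σ : Perm α) :
    (constants k α).toRepresentation.character σ = 1 := by
  have : (constants k α).toRepresentation σ = 1 :=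
    LinearMap.ext fun x => Subtype.ext (permRep_apply_of_mem_constants x.2 σ)
  rw [character, this, trace_one, show (constants k α).toSubmodule = k ∙ 1 from rfl,
    finrank_span_singleton one_ne_zero, Nat.cast_one]

lemma exists_apply_ne_of_mem_sumZero [CharZero k] {z : α → k} (hz : z ∈ sumZero k α)
    (hz0 : z ≠ 0) : ∃ i j, z i ≠ z j := by
  by_contra! hconst
  refine hz0 (funext fun i => ?_)
  have hsum : (Fintype.card α : k) * z i = 0 := by
    rw [← mem_sumZero.mp hz, Finset.sum_congr rfl fun j _ => hconst j i]
    simp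
  have : Nonempty α := ⟨i⟩
  exact (mul_eq_zero.mp hsum).resolve_left (Nat.cast_ne_zero.mpr Fintype.card_ne_zero)

variable [DecidableEq α]

lemma character_permRep (σ : Perm α) :
    (permRep k α).character σ = (Finset.univ.filter fun i => σ i = i).card := by
  rw [character, trace_eq_matrix_trace k (Pi.basisFun k α), Matrix.trace]
  simp only [Matrix.diag_apply, toMatrix_apply, Pi.basisFun_repr, Pi.basisFun_apply, permRep_single]
  simp [Pi.single_apply, Finset.sum_boole, eq_comm]

lemma isCompl_constants_sumZero [CharZero k] [Nonempty α] :
    IsCompl (constants k α) (sumZero k α) := by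
  have hsurj : Function.Surjective (∑ i, LinearMap.proj i : (α → k) →ₗ[k] k) := fun c =>
    ⟨Pi.single (Classical.arbitrary α) c, by simp⟩
  have h1 : (1 : α → k) ∉ sumZero k α := by simp [mem_sumZero]
  rw [← Subrepresentation.isCompl_toSubmodule_iff]
  exact (Submodule.isCompl_span_singleton_of_isCoatom_of_notMem
    (isCoatom_ker_of_surjective hsurj) h1).symm

lemma character_sumZero [CharZero k] [Nonempty α] (σ : Perm α) :
    (sumZero k α).toRepresentation.character σ =
      (Finset.univ.filter fun i => σ i = i).card - 1 := by
  rw [← character_permRep,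
    character_eq_add_of_isCompl (isCompl_constants_sumZero (k := k) (α := α)), character_constants]
  ring

lemma sumZero_le_of_mem {U : Subrepresentation (permRep k α)} {u : α → k} (hu : u ∈ U) {i j : α}
    (hij : u i ≠ u j) : sumZero k α ≤ U := by
  have hne : i ≠ j := fun h => hij (h ▸ rfl)
  have hbase : Pi.single i 1 - Pi.single j 1 ∈ U.toSubmodule := by
    have hdiff : u - permRep k α (swap i j) u = (u i - u j) • (Pi.single i 1 - Pi.single j 1) := by
      ext l
      rcases eq_or_ne l i with rfl | hli
      · simp [hne]
      rcases eq_or_ne l j with rfl | hlj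
      · simp [hli]
      · simp [swap_apply_of_ne_of_ne hli hlj, hli, hlj]
    have := U.toSubmodule.smul_mem (u i - u j)⁻¹
      (sub_mem hu (U.apply_mem_toSubmodule (swap i j) hu))
    rwa [hdiff, smul_smul, inv_mul_cancel₀ (sub_ne_zero.mpr hij), one_smul] at this
  have hpair (a b : α) (hab : a ≠ b) : Pi.single a 1 - Pi.single b 1 ∈ U.toSubmodule := by
    obtain ⟨σ, rfl, rfl⟩ := exists_apply_eq_and_apply_eq hne hab
    simpa [permRep_single] using U.apply_mem_toSubmodule σ hbase
  intro z hz
  have hz' : z = ∑ a, z a • (Pi.single a 1 - Pi.single i 1) := by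
    simp only [smul_sub, Finset.sum_sub_distrib, ← Finset.sum_smul, mem_sumZero.mp hz, zero_smul,
      sub_zero]
    exact pi_eq_sum_univ' z
  show z ∈ U.toSubmodule
  rw [hz']
  refine Submodule.sum_mem _ fun a _ => ?_
  rcases eq_or_ne a i with rfl | hai
  · simp
  · exact U.toSubmodule.smul_mem _ (hpair a i hai)

end PermRep

section Standard

variable {k V α : Type*} [Field k] [AddCommGroup V] [Module k V] [DecidableEq α]
  (ρ : Representation k (Perm α) V) {p : α} {w : V}

lemma apply_apply_swap_eq (hw : ∀ τ : Perm α, τ p = p → ρ τ w = w) (σ : Perm α) (i : α) :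
    ρ σ (ρ (swap p i) w) = ρ (swap p (σ i)) w := by
  have hτ : (swap p (σ i) * σ * swap p i) p = p := by simp
  calc ρ σ (ρ (swap p i) w) = ρ (swap p (σ i) * (swap p (σ i) * σ * swap p i)) w := by
        rw [← mul_assoc, ← mul_assoc, swap_mul_self, one_mul, map_mul, Module.End.mul_apply]
    _ = ρ (swap p (σ i)) w := by rw [map_mul, Module.End.mul_apply, hw _ hτ]

variable [Fintype α]

/-- Frobenius reciprocity: the permutation module is induced from the trivial representation of
the stabiliser of `p`, so a vector fixed by that stabiliser gives an intertwiner out of it. -/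
def permRepLift (hw : ∀ τ : Perm α, τ p = p → ρ τ w = w) : IntertwiningMap (permRep k α) ρ where
  toLinearMap := Fintype.linearCombination k fun i => ρ (swap p i) w
  isIntertwining' σ := LinearMap.ext fun x => by
    simp only [LinearMap.comp_apply, Fintype.linearCombination_apply, permRep_apply, map_sum,
      map_smul, apply_apply_swap_eq ρ hw]
    exact Fintype.sum_equiv σ.symm _ _ fun i => by simp

lemma permRepLift_single (hw : ∀ τ : Perm α, τ p = p → ρ τ w = w) :
    permRepLift ρ hw (Pi.single p 1) = w := by
  simp [permRepLift, Fintype.linearCombination_apply, Pi.single_apply, ← Perm.one_def]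

lemma constants_le_ker_permRepLift (hT : ρ.invariants = ⊥)
    (hw : ∀ τ : Perm α, τ p = p → ρ τ w = w) : constants k α ≤ (permRepLift ρ hw).ker := by
  intro x hx
  have : permRepLift ρ hw x ∈ ρ.invariants := fun τ => by
    rw [← (permRepLift ρ hw).isIntertwining, permRep_apply_of_mem_constants hx]
  rwa [hT, Submodule.mem_bot] at this

lemma eq_zero_of_mem_sumZero_of_permRepLift_eq_zero [CharZero k] (hT : ρ.invariants = ⊥)
    (hw0 : w ≠ 0) (hw : ∀ τ : Perm α, τ p = p → ρ τ w = w) {z : α → k} (hz : z ∈ sumZero k α)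
    (hφz : permRepLift ρ hw z = 0) : z = 0 := by
  have : Nonempty α := ⟨p⟩
  by_contra hz0
  obtain ⟨i, j, hij⟩ := exists_apply_ne_of_mem_sumZero hz hz0
  have htop : (permRepLift ρ hw).ker = ⊤ := top_unique <|
    isCompl_constants_sumZero.codisjoint.top_le.trans
      (sup_le (constants_le_ker_permRepLift ρ hT hw) (sumZero_le_of_mem hφz hij))
  have hp : Pi.single p 1 ∈ (permRepLift ρ hw).ker := htop ▸ _root_.trivial
  exact hw0 (permRepLift_single ρ hw ▸ hp)

/-- `permRepLift` is onto by irreducibility, kills the constants since `ρ` has no invariants, and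
is injective on the irreducible `sumZero`; hence `ρ ≅ sumZero`. -/
theorem character_eq_standard_of_stabilizer_fixed [CharZero k] [FiniteDimensional k V]
    [ρ.IsIrreducible] (hT : ρ.invariants = ⊥) (hw0 : w ≠ 0) (hw : ∀ τ : Perm α, τ p = p → ρ τ w = w)
    (σ : Perm α) : ρ.character σ = (Finset.univ.filter fun i => σ i = i).card - 1 := by
  have : Nonempty α := ⟨p⟩
  set φ := permRepLift ρ hw
  have hrange : φ.range = ⊤ := (eq_bot_or_eq_top φ.range).resolve_left fun h => hw0 <| by
    have : w ∈ φ.range := ⟨Pi.single p 1, permRepLift_single ρ hw⟩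
    rwa [h] at this
  let f := φ.toLinearMap ∘ₗ (sumZero k α).toSubmodule.subtype
  have hbij : Function.Bijective f := by
    refine ⟨(injective_iff_map_eq_zero f).mpr fun z hz => Subtype.ext
      (eq_zero_of_mem_sumZero_of_permRepLift_eq_zero ρ hT hw0 hw z.2 hz), fun v => ?_⟩
    obtain ⟨x, rfl⟩ : ∃ x, φ x = v := (hrange ▸ _root_.trivial : v ∈ φ.range)
    obtain ⟨a, ha, b, hb, rfl⟩ := Submodule.mem_sup.mp
      ((Subrepresentation.isCompl_toSubmodule_iff.mpr
        (isCompl_constants_sumZero (k := k) (α := α))).codisjoint.eq_top ▸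
        Submodule.mem_top : x ∈ _)
    exact ⟨⟨b, hb⟩, by simp [f, show φ a = 0 from constants_le_ker_permRepLift ρ hT hw ha]⟩
  let e : (sumZero k α).toRepresentation.Equiv ρ := .mk (LinearEquiv.ofBijective f hbij)
    fun g => LinearMap.ext fun z => IntertwiningMap.isIntertwining _ _ φ g z
  rw [← char_iso e, character_sumZero]

end Standard

section ThreeCycle

variable {α : Type*} [Fintype α] [DecidableEq α] {V : Type u} [AddCommGroup V] [Module ℂ V]
  [FiniteDimensional ℂ V] (ρ : Representation ℂ (Perm α) V) {g : Perm α}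

lemma character_threeCycle_eq_ofReal (hg : g.IsThreeCycle) :
    ρ.character g = ((3 * finrank ℂ (ker (ρ g - 1)) - finrank ℂ V) / 2 : ℝ) := by
  have h := ρ.character_one_add_two_mul_character_threeCycle hg
  rw [char_one] at h
  push_cast
  linear_combination h / 2

lemma finrank_div_le_of_card_eq_three (hα : Fintype.card α = 3) (hg : g.IsThreeCycle) :
    (finrank ℂ V : ℝ) / (Fintype.card α - 1) ≤ finrank ℂ V - (ρ.character g).re +
      finrank ℂ ρ.invariants + finrank ℂ (ρ.twist (signChar ℂ)).invariants := by
  have hfix : (finrank ℂ (ker (ρ g - 1)) : ℝ) ≤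
      finrank ℂ ρ.invariants + finrank ℂ (ρ.twist (signChar ℂ)).invariants := by
    exact_mod_cast (Submodule.finrank_mono
      (ρ.ker_sub_one_le_invariants_sup_of_card_eq_three hα hg)).trans
      (Submodule.finrank_add_le_finrank_add_finrank _ _)
  have hle : (finrank ℂ (ker (ρ g - 1)) : ℝ) ≤ finrank ℂ V := by
    exact_mod_cast Submodule.finrank_le _
  rw [character_threeCycle_eq_ofReal ρ hg, Complex.ofReal_re, hα]
  norm_num
  linarith

lemma finrank_div_le_of_restrictStabilizer_invariants_ne_bot [ρ.IsIrreducible]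
    (hT : ρ.invariants = ⊥) (hg : g.IsThreeCycle) {p : α}
    (h : (ρ.restrictStabilizer p).invariants ≠ ⊥) :
    (finrank ℂ V : ℝ) / (Fintype.card α - 1) ≤ finrank ℂ V - (ρ.character g).re := by
  obtain ⟨w, hw, hw0⟩ := Submodule.exists_mem_ne_zero_of_ne_bot h
  have hχ := character_eq_standard_of_stabilizer_fixed ρ hT hw0
    (ρ.apply_eq_of_mem_restrictStabilizer_invariants hw)
  have hd : (finrank ℂ V : ℝ) = Fintype.card α - 1 := by
    simpa using congrArg Complex.re (hχ 1)
  have hfix := card_filter_apply_eq_add_card_support g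
  rw [hg.card_support] at hfix
  have hχg : (ρ.character g).re + 4 = Fintype.card α := by
    rw [hχ g, ← hfix]
    push_cast
    simp only [Complex.sub_re, Complex.natCast_re, Complex.one_re]
    ring
  have hα : (3 : ℝ) ≤ Fintype.card α := by exact_mod_cast hg.three_le_card
  rw [hd, div_self (by linarith)]
  linarith

lemma finrank_div_le_of_invariants_eq_top (hg : g.IsThreeCycle)
    (h : ρ.invariants = ⊤ ∨ (ρ.twist (signChar ℂ)).invariants = ⊤) :
    (finrank ℂ V : ℝ) / (Fintype.card α - 1) ≤ finrank ℂ V - (ρ.character g).re +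
      finrank ℂ ρ.invariants + finrank ℂ (ρ.twist (signChar ℂ)).invariants := by
  have hα : (3 : ℝ) ≤ Fintype.card α := by exact_mod_cast hg.three_le_card
  have hg1 : ρ g = 1 := LinearMap.ext fun v => by
    rcases h with h | h
    · exact (h ▸ Submodule.mem_top : v ∈ ρ.invariants) g
    · simpa [hg.sign] using (h ▸ Submodule.mem_top : v ∈ (ρ.twist (signChar ℂ)).invariants) g
  have hd : (finrank ℂ V : ℝ) ≤
      finrank ℂ ρ.invariants + finrank ℂ (ρ.twist (signChar ℂ)).invariants := by
    rcases h with h | h <;> rw [h, finrank_top] <;> simp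
  rw [character, hg1, trace_one, Complex.natCast_re, sub_self, zero_add]
  exact (div_le_self (Nat.cast_nonneg _) (by linarith)).trans hd

lemma finrank_div_le_of_isIrreducible [ρ.IsIrreducible] (hg : g.IsThreeCycle)
    (hα : 3 < Fintype.card α)
    (ih : ∀ (p : α) (g' : Perm {x // x ≠ p}), g'.IsThreeCycle →
      (finrank ℂ V : ℝ) / (Fintype.card {x // x ≠ p} - 1) ≤
        finrank ℂ V - ((ρ.restrictStabilizer p).character g').re +
          finrank ℂ (ρ.restrictStabilizer p).invariants +
          finrank ℂ ((ρ.restrictStabilizer p).twist (signChar ℂ)).invariants) :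
    (finrank ℂ V : ℝ) / (Fintype.card α - 1) ≤ finrank ℂ V - (ρ.character g).re +
      finrank ℂ ρ.invariants + finrank ℂ (ρ.twist (signChar ℂ)).invariants := by
  have hα' : (3 : ℝ) < Fintype.card α := by exact_mod_cast hα
  rcases IsIrreducible.invariants_eq_bot_or_eq_top ρ with hT | hT
  swap
  · exact ρ.finrank_div_le_of_invariants_eq_top hg (.inl hT)
  rcases IsIrreducible.invariants_eq_bot_or_eq_top (ρ.twist (signChar ℂ)) with hS | hS
  swap
  · exact ρ.finrank_div_le_of_invariants_eq_top hg (.inr hS)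
  obtain ⟨p, -, hp⟩ := Finset.exists_mem_notMem_of_card_lt_card (s := g.support)
    (t := Finset.univ) (by rw [hg.card_support, Finset.card_univ]; omega)
  obtain ⟨g', rfl⟩ := (mem_range_ofSubtype_iff (p := (· ≠ p)) (g := g)).mpr fun x hx hxp =>
    hp (hxp ▸ hx)
  have hg' : g'.IsThreeCycle := by rwa [IsThreeCycle, ← cycleType_ofSubtype]
  rw [hT, hS, finrank_bot, Nat.cast_zero, add_zero, add_zero]
  by_cases hT' : (ρ.restrictStabilizer p).invariants = ⊥
  · by_cases hS' : ((ρ.restrictStabilizer p).twist (signChar ℂ)).invariants = ⊥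
    · have h := ih p g' hg'
      rw [hT', hS', finrank_bot, Nat.cast_zero, add_zero, add_zero, Fintype.card_subtype_compl,
        Fintype.card_subtype_eq, Nat.cast_sub (by omega), Nat.cast_one] at h
      refine le_trans ?_ h
      gcongr
      · linarith
      · norm_num
    · rw [twist_restrictStabilizer] at hS'
      have h := finrank_div_le_of_restrictStabilizer_invariants_ne_bot _ hS hg hS'
      rwa [character_twist, coe_signChar, hg.sign, Units.val_one, Int.cast_one, one_mul] at h
  · exact finrank_div_le_of_restrictStabilizer_invariants_ne_bot ρ hT hg hT'

end ThreeCycle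

theorem finrank_div_le_of_isThreeCycle {α : Type*} [Fintype α] [DecidableEq α] {V : Type u}
    [AddCommGroup V] [Module ℂ V] [FiniteDimensional ℂ V] (ρ : Representation ℂ (Perm α) V)
    {g : Perm α} (hg : g.IsThreeCycle) :
    (finrank ℂ V : ℝ) / (Fintype.card α - 1) ≤ finrank ℂ V - (ρ.character g).re +
      finrank ℂ ρ.invariants + finrank ℂ (ρ.twist (signChar ℂ)).invariants := by
  induction hn : Fintype.card α using Nat.strong_induction_on generalizing α V with
  | _ n ih =>
  rw [← hn]
  rcases hg.three_le_card.eq_or_lt with h3 | h4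
  · exact ρ.finrank_div_le_of_card_eq_three h3.symm hg
  refine induction_on_isCompl ℂ (Perm α)
    (P := fun {V} _ _ _ ρ => (finrank ℂ V : ℝ) / (Fintype.card α - 1) ≤
      finrank ℂ V - (ρ.character g).re + finrank ℂ ρ.invariants +
        finrank ℂ (ρ.twist (signChar ℂ)).invariants) ?_ ?_ ?_ ρ
  · intro V _ _ _ ρ hV
    have : ρ g = 0 := Subsingleton.elim _ _
    simp [character, this, finrank_zero_of_subsingleton]
  · intro V _ _ _ ρ _
    refine ρ.finrank_div_le_of_isIrreducible hg h4 fun p g' hg' => ?_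
    have hcard : Fintype.card {x // x ≠ p} < n := by
      rw [← hn, Fintype.card_subtype_compl, Fintype.card_subtype_eq]
      omega
    exact ih _ hcard (ρ.restrictStabilizer p) hg' rfl
  · intro V _ _ _ ρ U U' hc hU hU'
    rw [← Submodule.finrank_add_eq_of_isCompl (Subrepresentation.isCompl_toSubmodule_iff.mpr hc),
      character_eq_add_of_isCompl hc, finrank_invariants_eq_add_of_isCompl hc,
      finrank_invariants_twist_eq_add_of_isCompl hc]
    push_cast
    rw [add_div, Complex.add_re]
    linarith

end Representation

theorem char_one_sub_char_threeCycle_ge (m : ℕ) {W : Type*} [AddCommGroup W] [Module ℂ W]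
    [FiniteDimensional ℂ W] (ρ : Representation ℂ (Equiv.Perm (Fin m)) W)
    (hnz : (⊥ : Submodule ℂ W) ≠ ⊤)
    (hirr : ∀ U : Submodule ℂ W, (∀ σ, U.map (ρ σ) ≤ U) → U = ⊥ ∨ U = ⊤)
    (hnottriv : ¬ ∀ σ, LinearMap.trace ℂ W (ρ σ) = 1)
    (hnotsign : ¬ ∀ σ, LinearMap.trace ℂ W (ρ σ) = ((Equiv.Perm.sign σ : ℤ) : ℂ))
    (g : Equiv.Perm (Fin m)) (hg : g.IsThreeCycle) :
    (LinearMap.trace ℂ W (ρ g)).im = 0 ∧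
    (LinearMap.trace ℂ W (ρ 1)).re - (LinearMap.trace ℂ W (ρ g)).re ≥
      (LinearMap.trace ℂ W (ρ 1)).re / ((m : ℝ) - 1) := by
  have := ρ.isIrreducible_of_forall_map_le hnz hirr
  have hT : ρ.invariants = ⊥ :=
    (IsIrreducible.invariants_eq_bot_or_eq_top ρ).resolve_right fun h =>
      hnottriv (IsIrreducible.character_eq_one_of_invariants_eq_top ρ h)
  have hS : (ρ.twist (signChar ℂ)).invariants = ⊥ :=
    (IsIrreducible.invariants_eq_bot_or_eq_top _).resolve_right fun h =>
      hnotsign (IsIrreducible.character_eq_sign_of_twist_invariants_eq_top ρ h)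
  have hbound := ρ.finrank_div_le_of_isThreeCycle hg
  rw [hT, hS, finrank_bot, Nat.cast_zero, add_zero, add_zero, Fintype.card_fin] at hbound
  change (ρ.character g).im = 0 ∧ (ρ.character 1).re - (ρ.character g).re ≥ (ρ.character 1).re / _
  refine ⟨by rw [character_threeCycle_eq_ofReal ρ hg, Complex.ofReal_im], ?_⟩
  rw [char_one, Complex.natCast_re]
  exact hbound
end

section
/- Let G ≤ GL(V) be a maximal coprime linear group on a finite vector space V over F_q (i.e., (|G|,|V|)=1 and no coprime subgroup of GL(V) strictly contains G), acting irreducibly. If A ≤ GL(V) is any Abelian subgroup normalised by G, then |A| is coprime to |V| and A ≤ G. -/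
/-!
Let `p` be the characteristic of `K`. Since `A` is abelian, its `p`-elements form a subgroup
`P`, and `P` is normalised by `G` because `A` is. A `p`-group acting on the `p`-group `V` fixes
a nonzero vector, so the fixed space of `P` is a nonzero `G`-invariant subspace; by irreducibility
it is all of `V`, i.e. `P = 1`. Hence `|A|` is prime to `p`, and so is `|AG|`, which divides
`|A| |G|`; maximality of `G` gives `AG = G`.
-/

open scoped IsMulCommutative

namespace Subgroup

variable {M : Type*} [Group M]

theorem card_sup_dvd_of_le_normalizer {N H : Subgroup M} (hH : H ≤ normalizer N) :
    Nat.card ↥(N ⊔ H) ∣ Nat.card N * Nat.card H := by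
  have := normal_subgroupOf_of_le_normalizer hH
  have := normal_subgroupOf_sup_of_le_normalizer hH
  rw [sup_comm, card_eq_card_quotient_mul_card_subgroup (N.subgroupOf (H ⊔ N)),
    ← Nat.card_congr (QuotientGroup.quotientInfEquivProdNormalizerQuotient H N hH).toEquiv,
    Nat.card_congr (subgroupOfEquivOfLe le_sup_right).toEquiv, mul_comm]
  exact mul_dvd_mul_left _ (card_quotient_dvd_card _)

def primaryComponent (A : Subgroup M) [IsMulCommutative A] (p : ℕ) : Subgroup M :=
  (CommGroup.primaryComponent A p).map A.subtype

variable {A : Subgroup M} [IsMulCommutative A] {p : ℕ}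

theorem mem_primaryComponent {x : M} :
    x ∈ A.primaryComponent p ↔ x ∈ A ∧ ∃ k : ℕ, x ^ p ^ k = 1 := by
  rw [primaryComponent, mem_map]
  constructor
  · rintro ⟨y, ⟨k, hk⟩, rfl⟩
    exact ⟨y.2, k, by simpa using congrArg A.subtype hk⟩
  · rintro ⟨hx, k, hk⟩
    exact ⟨⟨x, hx⟩, ⟨k, Subtype.ext hk⟩, rfl⟩

theorem isPGroup_primaryComponent [Fact p.Prime] : IsPGroup p (A.primaryComponent p) :=
  CommGroup.primaryComponent.isPGroup.map A.subtype

theorem normalizer_le_normalizer_primaryComponent :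
    normalizer (A : Set M) ≤ normalizer (A.primaryComponent p : Set M) := by
  refine le_normalizer_iff.mpr fun g hg x hx => ?_
  obtain ⟨hxA, k, hk⟩ := mem_primaryComponent.mp hx
  exact mem_primaryComponent.mpr
    ⟨(mem_normalizer_iff.mp hg x).mp hxA, k, by rw [conj_pow, hk, mul_one, mul_inv_cancel]⟩

theorem not_dvd_card_of_primaryComponent_eq_bot [Finite A] [hp : Fact p.Prime]
    (hA : A.primaryComponent p = ⊥) : ¬ p ∣ Nat.card A := by
  intro hdvd
  obtain ⟨a, ha⟩ := exists_prime_orderOf_dvd_card' p hdvd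
  have hmem : (a : M) ∈ A.primaryComponent p :=
    mem_primaryComponent.mpr
      ⟨a.2, 1, by rw [pow_one, ← ha, ← coe_pow, pow_orderOf_eq_one, coe_one]⟩
  rw [hA, mem_bot, OneMemClass.coe_eq_one] at hmem
  exact hp.out.ne_one (by rw [← ha, hmem, orderOf_one])

end Subgroup

theorem Module.exists_natCard_eq_ringChar_pow (K V : Type*) [Field K] [Finite K] [AddCommGroup V]
    [Module K V] [Finite V] : ∃ n : ℕ, Nat.card V = ringChar K ^ n := by
  have := Fintype.ofFinite K
  have := Fintype.ofFinite V
  obtain ⟨m, -, hK⟩ := FiniteField.card K (ringChar K)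
  refine ⟨m * finrank K V, ?_⟩
  rw [Nat.card_eq_fintype_card, card_eq_pow_finrank (K := K), hK, pow_mul]

namespace Representation

variable {K P V : Type*} [Field K] [Finite K] [Group P] [AddCommGroup V] [Module K V] [Finite V]
  [Nontrivial V]

theorem invariants_ne_bot_of_isPGroup (ρ : Representation K P V)
    (hP : IsPGroup (ringChar K) P) : ρ.invariants ≠ ⊥ := by
  let := MulAction.compHom V ρ
  have : Fact (ringChar K).Prime := ⟨CharP.char_is_prime K _⟩
  obtain ⟨n, hn⟩ := Module.exists_natCard_eq_ringChar_pow K V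
  have hn0 : n ≠ 0 := by
    rintro rfl
    exact Finite.one_lt_card.ne' (by rw [hn, pow_zero])
  obtain ⟨v, hv, hv0⟩ := hP.exists_fixed_point_of_prime_dvd_card_of_fixed_point V
    (hn ▸ dvd_pow_self _ hn0) (a := 0) fun g => map_zero (ρ g)
  exact fun h => hv0 (((Submodule.mem_bot K).mp (h ▸ (show v ∈ ρ.invariants from hv))).symm)

end Representation

namespace LinearMap.GeneralLinearGroup

open Subgroup

variable {K V : Type*} [Field K] [AddCommGroup V] [Module K V]

noncomputable def fixedSubmodule (P : Subgroup (GeneralLinearGroup K V)) : Submodule K V :=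
  (Representation.ofDistribMulAction K P V).invariants

def IsIrreducible (G : Subgroup (GeneralLinearGroup K V)) : Prop :=
  ∀ W : Submodule K V, (∀ u ∈ G, W.map (u : V →ₗ[K] V) ≤ W) → W = ⊥ ∨ W = ⊤

variable {P : Subgroup (GeneralLinearGroup K V)}

theorem mem_fixedSubmodule {v : V} : v ∈ fixedSubmodule P ↔ ∀ g ∈ P, g • v = v := by
  simp [fixedSubmodule]

theorem map_fixedSubmodule_le {g : GeneralLinearGroup K V} (hg : g ∈ normalizer (P : Set _)) :
    (fixedSubmodule P).map (g : V →ₗ[K] V) ≤ fixedSubmodule P := by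
  rintro _ ⟨v, hv, rfl⟩
  refine mem_fixedSubmodule.mpr fun x hx => ?_
  have hconj : g⁻¹ * x * g ∈ P := (mem_normalizer_iff''.mp hg x).mp hx
  change x • g • v = g • v
  calc x • g • v = g • (g⁻¹ * x * g) • v := by simp [mul_smul]
    _ = g • v := by rw [mem_fixedSubmodule.mp hv _ hconj]

variable [Finite K] [Finite V]

theorem eq_bot_of_isPGroup_of_le_normalizer {G : Subgroup (GeneralLinearGroup K V)}
    (hirr : IsIrreducible G)
    (hP : IsPGroup (ringChar K) P) (hG : G ≤ normalizer (P : Set _)) : P = ⊥ := by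
  have htop : fixedSubmodule P = ⊤ := by
    rcases subsingleton_or_nontrivial V with _ | _
    · exact Subsingleton.elim _ _
    · exact (hirr _ fun u hu => map_fixedSubmodule_le (hG hu)).resolve_left
        (Representation.invariants_ne_bot_of_isPGroup _ hP)
  refine eq_bot_iff.mpr fun x hx => mem_bot.mpr (Units.ext (LinearMap.ext fun v => ?_))
  exact mem_fixedSubmodule.mp (htop ▸ Submodule.mem_top) x hx

theorem coprime_card_of_le_normalizer {G A : Subgroup (GeneralLinearGroup K V)}
    [IsMulCommutative A]
    (hirr : IsIrreducible G)
    (hG : G ≤ normalizer (A : Set _)) : Nat.Coprime (Nat.card A) (Nat.card V) := by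
  have hp : (ringChar K).Prime := CharP.char_is_prime K _
  have : Fact (ringChar K).Prime := ⟨hp⟩
  have : Finite (V →ₗ[K] V) := Finite.of_injective _ DFunLike.coe_injective
  have hA := eq_bot_of_isPGroup_of_le_normalizer hirr isPGroup_primaryComponent
    (hG.trans normalizer_le_normalizer_primaryComponent)
  obtain ⟨n, hn⟩ := Module.exists_natCard_eq_ringChar_pow K V
  rw [hn]
  exact (hp.coprime_iff_not_dvd.mpr (not_dvd_card_of_primaryComponent_eq_bot hA)).symm.pow_right _

end LinearMap.GeneralLinearGroup

theorem abelian_normalised_le_maximal_coprime {K : Type*} [Field K] [Fintype K] {V : Type*}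
    [AddCommGroup V] [Module K V] [Fintype V]
    (G : Subgroup (LinearMap.GeneralLinearGroup K V))
    (hcop : Nat.Coprime (Nat.card G) (Fintype.card V))
    (hmax : ∀ L : Subgroup (LinearMap.GeneralLinearGroup K V),
      Nat.Coprime (Nat.card L) (Fintype.card V) → G ≤ L → L = G)
    (hirr : ∀ W : Submodule K V,
      (∀ u ∈ G, W.map ((u : LinearMap.GeneralLinearGroup K V) : V →ₗ[K] V) ≤ W) →
        W = ⊥ ∨ W = ⊤)
    (A : Subgroup (LinearMap.GeneralLinearGroup K V))
    (hab : ∀ a ∈ A, ∀ b ∈ A, a * b = b * a)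
    (hnorm : ∀ g ∈ G, ∀ a ∈ A, g * a * g⁻¹ ∈ A) :
    Nat.Coprime (Nat.card A) (Fintype.card V) ∧ A ≤ G := by
  have hG : G ≤ Subgroup.normalizer (A : Set _) := Subgroup.le_normalizer_iff.mpr hnorm
  have : IsMulCommutative A := ⟨⟨fun a b => Subtype.ext (hab a a.2 b b.2)⟩⟩
  have hA : Nat.Coprime (Nat.card A) (Fintype.card V) :=
    Nat.card_eq_fintype_card (α := V) ▸
      LinearMap.GeneralLinearGroup.coprime_card_of_le_normalizer hirr hG
  have hAG : Nat.Coprime (Nat.card ↥(A ⊔ G)) (Fintype.card V) :=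
    (hA.mul_left hcop).coprime_dvd_left (Subgroup.card_sup_dvd_of_le_normalizer hG)
  exact ⟨hA, hmax _ hAG le_sup_right ▸ le_sup_left⟩
end
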